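/- Let σ be an interior payoff monotone strategy profile for a finite normal-form game Γ. Then there exists a profile f=(f_i)_{i∈N} of control cost functions such that for each player i and each pair of actions a_l, a_k ∈ A_i, U_i(σ_{-i},a_l) − U_i(σ_{-i},a_k) = f_i'(σ_i(a_l)) − f_i'(σ_i(a_k)); by van Damme's characterization these first-order conditions mean σ is a Nash equilibrium of the control cost game associated with Γ and f. -/

import Mathlib

open Filter Topology

section GameDefs

variable {N : Type} [Fintype N] [DecidableEq N] {A : N → Type}
  [∀ i, Fintype (A i)] [∀ i, DecidableEq (A i)]

/-- A mixed-strategy profile: each `σ i` is a probability distribution on `A i`. -/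
def IsStrategy (σ : ∀ i, A i → ℝ) : Prop :=
  (∀ i a, 0 ≤ σ i a) ∧ ∀ i, ∑ a, σ i a = 1

/-- An interior profile places positive probability on every action. -/
def Interior (σ : ∀ i, A i → ℝ) : Prop :=
  ∀ i a, 0 < σ i a

/-- Expected utility of player `i` at profile `σ`. -/
noncomputable def expUtil (u : ∀ i : N, (∀ j, A j) → ℝ) (σ : ∀ i, A i → ℝ) (i : N) : ℝ :=
  ∑ a : ∀ j, A j, u i a * ∏ j, σ j (a j)

/-- Expected utility of player `i` from playing action `ai` against `σ₋ᵢ`. -/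
noncomputable def devUtil (u : ∀ i : N, (∀ j, A j) → ℝ) (σ : ∀ i, A i → ℝ)
    (i : N) (ai : A i) : ℝ :=
  expUtil u (Function.update σ i (fun b => if b = ai then (1 : ℝ) else 0)) i

/-- Nash equilibrium. -/
def IsNash (u : ∀ i : N, (∀ j, A j) → ℝ) (σ : ∀ i, A i → ℝ) : Prop :=
  IsStrategy σ ∧ ∀ (i : N) (μ : A i → ℝ), (∀ a, 0 ≤ μ a) → (∑ a, μ a = 1) →
    expUtil u (Function.update σ i μ) i ≤ expUtil u σ i

/-- Weak payoff monotonicity: differences in behavior reveal differences in payoffs. -/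
def WeaklyPayoffMonotone (u : ∀ i : N, (∀ j, A j) → ℝ) (σ : ∀ i, A i → ℝ) : Prop :=
  IsStrategy σ ∧ ∀ (i : N) (ai bi : A i), σ i bi < σ i ai →
    devUtil u σ i bi < devUtil u σ i ai

/-- Payoff monotonicity. -/
def PayoffMonotone (u : ∀ i : N, (∀ j, A j) → ℝ) (σ : ∀ i, A i → ℝ) : Prop :=
  IsStrategy σ ∧ ∀ (i : N) (ai bi : A i),
    σ i bi ≤ σ i ai ↔ devUtil u σ i bi ≤ devUtil u σ i ai

/-- Pointwise convergence of a sequence of profiles. -/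
def ConvergesTo (s : ℕ → ∀ i, A i → ℝ) (σ : ∀ i, A i → ℝ) : Prop :=
  ∀ (i : N) (ai : A i), Tendsto (fun n => s n i ai) atTop (𝓝 (σ i ai))

/-- Empirical equilibrium: a Nash equilibrium that is the limit of weakly payoff
monotone profiles. -/
def IsEmpirical (u : ∀ i : N, (∀ j, A j) → ℝ) (σ : ∀ i, A i → ℝ) : Prop :=
  IsNash u σ ∧ ∃ s : ℕ → ∀ i, A i → ℝ,
    (∀ n, WeaklyPayoffMonotone u (s n)) ∧ ConvergesTo s σ

/-- Proper equilibrium (Myerson). -/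
def IsProper (u : ∀ i : N, (∀ j, A j) → ℝ) (σ : ∀ i, A i → ℝ) : Prop :=
  IsStrategy σ ∧ ∃ s : ℕ → ∀ i, A i → ℝ,
    (∀ n, IsStrategy (s n) ∧ Interior (s n) ∧
      ∀ (i : N) (ai bi : A i),
        devUtil u (s n) i bi < devUtil u (s n) i ai →
          s n i bi ≤ (1 / (n + 1) : ℝ) * s n i ai) ∧
    ConvergesTo s σ

/-- Perfect equilibrium (Selten, in Myerson's formulation). -/
def IsPerfect (u : ∀ i : N, (∀ j, A j) → ℝ) (σ : ∀ i, A i → ℝ) : Prop :=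
  IsStrategy σ ∧ ∃ s : ℕ → ∀ i, A i → ℝ,
    (∀ n, IsStrategy (s n) ∧ Interior (s n) ∧
      ∀ (i : N) (ai : A i), (1 / (n + 1) : ℝ) < s n i ai →
        ∀ bi : A i, devUtil u (s n) i bi ≤ devUtil u (s n) i ai) ∧
    ConvergesTo s σ

/-- `bi` weakly dominates `ai` for player `i`. -/
def WeaklyDominates (u : ∀ i : N, (∀ j, A j) → ℝ) (i : N) (bi ai : A i) : Prop :=
  (∀ a : ∀ j, A j, u i (Function.update a i ai) ≤ u i (Function.update a i bi)) ∧
  ∃ a : ∀ j, A j, u i (Function.update a i ai) < u i (Function.update a i bi)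

/-- Undominated Nash equilibrium. -/
def IsUndominatedNash (u : ∀ i : N, (∀ j, A j) → ℝ) (σ : ∀ i, A i → ℝ) : Prop :=
  IsNash u σ ∧ ∀ (i : N) (ai : A i), 0 < σ i ai →
    ¬ ∃ bi : A i, WeaklyDominates u i bi ai

end GameDefs

/-- A regular quantal response function on a finite set of actions `B`:
interiority, continuity, responsiveness, and monotonicity. -/
def IsRegularQRF {B : Type} [Fintype B] [DecidableEq B]
    (p : (B → ℝ) → (B → ℝ)) : Prop :=
  (∀ x, (∀ a, 0 < p x a) ∧ ∑ a, p x a = 1) ∧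
  Continuous p ∧
  (∀ (x : B → ℝ) (η : ℝ) (a : B), 0 < η →
    p x a < p (Function.update x a (x a + η)) a) ∧
  ∀ (x : B → ℝ) (a b : B), x b < x a → p x b < p x a

section QREDefs

variable {N : Type} [Fintype N] [DecidableEq N] {A : N → Type}
  [∀ i, Fintype (A i)] [∀ i, DecidableEq (A i)]

/-- Quantal response equilibrium with respect to a profile of QRFs `p`. -/
def IsQRE (u : ∀ i : N, (∀ j, A j) → ℝ) (p : ∀ i, (A i → ℝ) → (A i → ℝ))
    (σ : ∀ i, A i → ℝ) : Prop :=
  ∀ i : N, σ i = p i (fun ai => devUtil u σ i ai)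

/-- A sequence of profiles of QRFs is utility maximizing in the limit. -/
def UtilityMaximizingInLimit (u : ∀ i : N, (∀ j, A j) → ℝ)
    (p : ℕ → ∀ i, (A i → ℝ) → (A i → ℝ)) : Prop :=
  ∀ (s : ℕ → ∀ i, A i → ℝ) (σ : ∀ i, A i → ℝ),
    (∀ n, IsQRE u (p n) (s n)) → ConvergesTo s σ → IsNash u σ

/-- `σ` is approachable by regular QRE that are utility maximizing in the limit. -/
def ApproachableByRegularQRE (u : ∀ i : N, (∀ j, A j) → ℝ) (σ : ∀ i, A i → ℝ) : Prop :=
  ∃ p : ℕ → ∀ i, (A i → ℝ) → (A i → ℝ),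
    (∀ n i, IsRegularQRF (p n i)) ∧ UtilityMaximizingInLimit u p ∧
    ∃ s : ℕ → ∀ i, A i → ℝ, (∀ n, IsQRE u (p n) (s n)) ∧ ConvergesTo s σ

end QREDefs

/-- A control cost function (van Damme), bundled with its derivative on `(0,1]`. -/
structure ControlCost where
  f : ℝ → ℝ
  f' : ℝ → ℝ
  hasDeriv : ∀ x ∈ Set.Ioc (0:ℝ) 1, HasDerivWithinAt f (f' x) (Set.Ioc (0:ℝ) 1) x
  contDeriv : ContinuousOn f' (Set.Ioc (0:ℝ) 1)
  anti : StrictAntiOn f (Set.Ioc (0:ℝ) 1)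
  convex : StrictConvexOn ℝ (Set.Ioc (0:ℝ) 1) f
  atOne : f 1 = 0
  blowup : Tendsto f (nhdsWithin 0 (Set.Ioi (0:ℝ))) atTop


/-! Payoff monotonicity says that on each player's actions the payoff `U_i(σ_{-i}, ·)` is a
strictly increasing function `y` of the probability `σ_i(·)`. Interpolate `y` on the finitely many
values of `σ_i` by a continuous strictly increasing `H : ℝ → ℝ`, and take as derivative of the cost
`f'(t) = H t - H 1 - max (1/t) (1/δ)` with `δ` below every `σ_i(a)`. Then `f'` is strictly
increasing, agrees with `H` up to a constant at every `σ_i(a)`, and `f' t ≤ -1/t` on `(0,1]`, so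
`f x = ∫₁ˣ f'` is strictly decreasing, strictly convex, and at least `-log x`. -/

open Set

lemma exists_continuous_strictMono_extend {H : ℝ → ℝ} (hc : Continuous H) (hm : StrictMono H)
    {m a b : ℝ} (hma : m < a) (hb : H m < b) :
    ∃ H' : ℝ → ℝ, Continuous H' ∧ StrictMono H' ∧ EqOn H' H (Iic m) ∧ H' a = b := by
  set k := (b - H m) / (a - m)
  have hk : 0 < k := div_pos (by linarith) (by linarith)
  have hleft : EqOn (fun x => H (min x m) + k * max (x - m) 0) H (Iic m) := fun x hx => by
    simp [min_eq_left (show x ≤ m from hx), max_eq_right (sub_nonpos.2 (show x ≤ m from hx))]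
  have hright : EqOn (fun x => H (min x m) + k * max (x - m) 0) (fun x => H m + k * (x - m))
      (Ici m) := fun x hx => by
    simp [min_eq_right (show m ≤ x from hx), max_eq_left (sub_nonneg.2 (show m ≤ x from hx))]
  refine ⟨fun x => H (min x m) + k * max (x - m) 0, by fun_prop, ?_, hleft, ?_⟩
  · refine StrictMonoOn.Iic_union_Ici (a := m) ((hm.strictMonoOn _).congr hleft.symm) ?_
    refine StrictMonoOn.congr (fun x _ y _ hxy => ?_) hright.symm
    gcongr
  · rw [hright hma.le]
    simp only [k, div_mul_cancel₀ _ (sub_ne_zero.2 hma.ne')]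
    ring

lemma exists_continuous_strictMono_eqOn (S : Finset ℝ) {y : ℝ → ℝ} (hy : StrictMonoOn y S) :
    ∃ H : ℝ → ℝ, Continuous H ∧ StrictMono H ∧ EqOn H y S := by
  induction S using Finset.induction_on_max with
  | empty => exact ⟨id, continuous_id, strictMono_id, by simp⟩
  | insert a s has ih =>
    obtain ⟨H, hc, hm, hHy⟩ := ih (hy.mono (by simp))
    rcases s.eq_empty_or_nonempty with rfl | hs
    · exact ⟨fun x => x - a + y a, by fun_prop, fun x z h => by simpa using h, by simp⟩
    have hmax := s.max'_mem hs
    obtain ⟨H', hc', hm', hH'H, hH'a⟩ := exists_continuous_strictMono_extend hc hm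
      (has _ hmax) (b := y a) (by
        rw [hHy hmax]
        exact hy (by simp [hmax]) (by simp) (has _ hmax))
    refine ⟨H', hc', hm', fun x hx => ?_⟩
    obtain rfl | hx := Finset.mem_insert.1 hx
    · exact hH'a
    · exact (hH'H (s.le_max' x hx)).trans (hHy hx)

lemma exists_continuous_strictMono_comp_eq {α : Type*} [Fintype α] {p q : α → ℝ}
    (hpq : ∀ a b, p a ≤ p b ↔ q a ≤ q b) :
    ∃ H : ℝ → ℝ, Continuous H ∧ StrictMono H ∧ H ∘ p = q := by
  classical
  have hfac : q.FactorsThrough p := fun a b h =>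
    le_antisymm ((hpq a b).1 h.le) ((hpq b a).1 h.ge)
  obtain ⟨H, hc, hm, hH⟩ := exists_continuous_strictMono_eqOn (Finset.univ.image p)
    (y := Function.extend p q 0) (by
      simp only [Finset.coe_image, Finset.coe_univ, image_univ]
      rintro _ ⟨a, rfl⟩ _ ⟨b, rfl⟩ hab
      rw [hfac.extend_apply, hfac.extend_apply]
      exact lt_of_not_ge fun h => hab.not_ge ((hpq b a).2 h))
  refine ⟨H, hc, hm, funext fun a => ?_⟩
  rw [Function.comp_apply, hH (by simp), hfac.extend_apply]

lemma hasDerivAt_integral_of_continuousOn {F : ℝ → ℝ} {s : Set ℝ} (hs : IsOpen s)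
    [hs' : s.OrdConnected] (hF : ContinuousOn F s) {a x : ℝ} (ha : a ∈ s) (hx : x ∈ s) :
    HasDerivAt (fun x => ∫ t in a..x, F t) (F x) x :=
  intervalIntegral.integral_hasDerivAt_right
    ((hF.mono (hs'.uIcc_subset ha hx)).intervalIntegrable)
    (hF.stronglyMeasurableAtFilter hs x hx) (hF.continuousAt (hs.mem_nhds hx))

lemma neg_log_le_integral {F : ℝ → ℝ} (hF : ContinuousOn F (Ioi 0))
    (hle : ∀ t ∈ Ioc (0 : ℝ) 1, F t ≤ -t⁻¹) {x : ℝ} (hx : x ∈ Ioc (0 : ℝ) 1) :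
    -Real.log x ≤ ∫ t in (1 : ℝ)..x, F t := by
  have hsub : uIcc x 1 ⊆ Ioi 0 := by
    rw [uIcc_of_le hx.2]; exact fun t ht => hx.1.trans_le ht.1
  calc -Real.log x = ∫ t in x..1, t⁻¹ := by
        rw [integral_inv_of_pos hx.1 one_pos, one_div, Real.log_inv]
    _ ≤ ∫ t in x..1, -F t :=
        intervalIntegral.integral_mono_on hx.2
          ((continuousOn_inv₀.mono fun t ht => (hsub ht).ne').intervalIntegrable)
          ((hF.mono hsub).intervalIntegrable.neg)
          (fun t ht => le_neg.1 (hle t ⟨hx.1.trans_le ht.1, ht.2⟩))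
    _ = ∫ t in (1 : ℝ)..x, F t := by
        rw [intervalIntegral.integral_neg, intervalIntegral.integral_symm, neg_neg]

noncomputable def ControlCost.ofDeriv (F : ℝ → ℝ) (hF : ContinuousOn F (Ioi 0))
    (hmono : StrictMonoOn F (Ioc 0 1)) (hle : ∀ t ∈ Ioc (0 : ℝ) 1, F t ≤ -t⁻¹) :
    ControlCost :=
  have hderiv : ∀ x ∈ Ioc (0 : ℝ) 1, HasDerivAt (fun x => ∫ t in (1 : ℝ)..x, F t) (F x) x :=
    fun x hx => hasDerivAt_integral_of_continuousOn isOpen_Ioi hF (mem_Ioi.2 one_pos) hx.1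
  have hcont : ContinuousOn (fun x => ∫ t in (1 : ℝ)..x, F t) (Ioc 0 1) :=
    (fun x hx => (hderiv x hx).continuousAt.continuousWithinAt)
  { f := fun x => ∫ t in (1 : ℝ)..x, F t
    f' := F
    hasDeriv := fun x hx => (hderiv x hx).hasDerivWithinAt
    contDeriv := hF.mono Ioc_subset_Ioi_self
    anti := strictAntiOn_of_deriv_neg (convex_Ioc 0 1) hcont fun x hx => by
      rw [interior_Ioc] at hx
      rw [(hderiv x (Ioo_subset_Ioc_self hx)).deriv]
      exact (hle x (Ioo_subset_Ioc_self hx)).trans_lt (neg_neg_of_pos (inv_pos.2 hx.1))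
    convex := StrictMonoOn.strictConvexOn_of_deriv (convex_Ioc 0 1) hcont <| by
      rw [interior_Ioc]
      exact (hmono.mono Ioo_subset_Ioc_self).congr fun x hx =>
        ((hderiv x (Ioo_subset_Ioc_self hx)).deriv).symm
    atOne := intervalIntegral.integral_same
    blowup := tendsto_atTop_mono' _
      (Filter.mem_of_superset (Ioc_mem_nhdsGT one_pos) fun _ => neg_log_le_integral hF hle)
      (tendsto_neg_atBot_atTop.comp Real.tendsto_log_nhdsGT_zero) }

lemma ControlCost.exists_deriv_eq_sub_const {H : ℝ → ℝ} (hc : Continuous H) (hm : StrictMono H)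
    {δ : ℝ} (hδ : 0 < δ) : ∃ (c : ControlCost) (k : ℝ), ∀ x, δ ≤ x → c.f' x = H x - k := by
  set F := fun t : ℝ => H t - H 1 - max t⁻¹ δ⁻¹
  have hF : ContinuousOn F (Ioi 0) := by
    fun_prop (disch := exact fun t ht => ne_of_gt ht)
  have hmono : StrictMonoOn F (Ioc 0 1) := fun x hx y _ hxy => by
    have : max y⁻¹ δ⁻¹ ≤ max x⁻¹ δ⁻¹ := max_le_max_right _ (inv_anti₀ hx.1 hxy.le)
    linarith [hm hxy]
  have hle : ∀ t ∈ Ioc (0 : ℝ) 1, F t ≤ -t⁻¹ := fun t ht => by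
    linarith [hm.monotone ht.2, le_max_left t⁻¹ δ⁻¹]
  refine ⟨.ofDeriv F hF hmono hle, H 1 + δ⁻¹, fun x hx => ?_⟩
  simp only [ControlCost.ofDeriv, F, max_eq_right (inv_anti₀ hδ hx)]
  ring

lemma exists_controlCost_foc {α : Type*} [Fintype α] {p q : α → ℝ} (hp : ∀ a, 0 < p a)
    (hpq : ∀ a b, p a ≤ p b ↔ q a ≤ q b) :
    ∃ c : ControlCost, ∀ a b, q a - q b = c.f' (p a) - c.f' (p b) := by
  obtain ⟨H, hc, hm, hH⟩ := exists_continuous_strictMono_comp_eq hpq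
  obtain ⟨δ, hδ, hδp⟩ : ∃ δ, δ ∈ Ioi 0 ∧ ∀ a, δ < p a :=
    ((eventually_mem_nhdsWithin (a := 0)).and (eventually_all.2 fun a =>
      (eventually_lt_nhds (hp a)).filter_mono nhdsWithin_le_nhds)).exists
  obtain ⟨c, k, hck⟩ := ControlCost.exists_deriv_eq_sub_const hc hm hδ
  refine ⟨c, fun a b => ?_⟩
  rw [hck _ (hδp a).le, hck _ (hδp b).le, ← hH, Function.comp_apply, Function.comp_apply]
  ring

theorem interior_pm_control_cost_foc {N : Type} [Fintype N] [DecidableEq N] {A : N → Type}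
    [∀ i, Fintype (A i)] [∀ i, DecidableEq (A i)]
    (u : ∀ i : N, (∀ j, A j) → ℝ) (σ : ∀ i, A i → ℝ)
    (hint : Interior σ) (hpm : PayoffMonotone u σ) :
    ∃ f : N → ControlCost, ∀ (i : N) (al ak : A i),
      devUtil u σ i al - devUtil u σ i ak
        = (f i).f' (σ i al) - (f i).f' (σ i ak) := by
  choose f hf using fun i => exists_controlCost_foc (hint i) fun a b => hpm.2 i b a
  exact ⟨f, hf⟩
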